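/- Let ρ = p|ψ_n⟩⟨ψ_n| + (1−p)|GHZ_n⟩⟨GHZ_n| with 0 < p < 1, where |ψ_n⟩ = (|10...0⟩+|01...0⟩)/√2 and |GHZ_n⟩ = (|0...0⟩+|1...1⟩)/√2. Then the biseparable state σ = p|ψ_n⟩⟨ψ_n| + ((1−p)/2)|0...0⟩⟨0...0| + ((1−p)/2)|1...1⟩⟨1...1| has the same marginals as ρ on every subset S ⊂ [n] with |S| = n−1; hence the compatibility set C(ρ, S_{n−1}) contains a biseparable state. -/

import Mathlib

open scoped Matrix ComplexOrder

noncomputable section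

namespace QDL

variable {ι : Type*} [Fintype ι] [DecidableEq ι]

abbrev Config (d : ι → ℕ) := ∀ i, Fin (d i)

def IsState {d : ι → ℕ} (ρ : Matrix (Config d) (Config d) ℂ) : Prop :=
  ρ.PosSemidef ∧ ρ.trace = 1

def merge {d : ι → ℕ} (S : Finset ι)
    (f : Config (fun i : {i // i ∈ S} => d i))
    (g : Config (fun i : {i // i ∉ S} => d i)) : Config d := fun i =>
  if h : i ∈ S then f ⟨i, h⟩ else g ⟨i, h⟩

/-- Partial trace of `ρ` onto the subsystems in `S`. -/
def marginal {d : ι → ℕ} (S : Finset ι)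
    (ρ : Matrix (Config d) (Config d) ℂ) :
    Matrix (Config (fun i : {i // i ∈ S} => d i))
      (Config (fun i : {i // i ∈ S} => d i)) ℂ :=
  fun f g => ∑ h : Config (fun i : {i // i ∉ S} => d i), ρ (merge S f h) (merge S g h)

def Compatible {d : ι → ℕ} (𝒮 : Finset (Finset ι))
    (ρ σ : Matrix (Config d) (Config d) ℂ) : Prop :=
  ∀ S ∈ 𝒮, marginal S σ = marginal S ρ

def prodMat {d : ι → ℕ} (A : ∀ i, Matrix (Fin (d i)) (Fin (d i)) ℂ) :
    Matrix (Config d) (Config d) ℂ := fun f g => ∏ i, A i (f i) (g i)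

def FullySep {d : ι → ℕ} (ρ : Matrix (Config d) (Config d) ℂ) : Prop :=
  ∃ (k : ℕ) (w : Fin k → ℝ) (A : Fin k → ∀ i, Matrix (Fin (d i)) (Fin (d i)) ℂ),
    (∀ j, 0 ≤ w j) ∧ (∀ j i, (A j i).PosSemidef) ∧
    ρ = ∑ j, (w j : ℂ) • prodMat (A j)

def prodAcross {d : ι → ℕ} (S : Finset ι)
    (A : Matrix (Config (fun i : {i // i ∈ S} => d i))
      (Config (fun i : {i // i ∈ S} => d i)) ℂ)
    (B : Matrix (Config (fun i : {i // i ∉ S} => d i))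
      (Config (fun i : {i // i ∉ S} => d i)) ℂ) :
    Matrix (Config d) (Config d) ℂ :=
  fun f g => A (fun i => f i) (fun i => g i) * B (fun i => f i) (fun i => g i)

/-- `ρ` is a mixture of biproduct states with respect to the bipartition `S | Sᶜ`. -/
def SepAcross {d : ι → ℕ} (S : Finset ι)
    (ρ : Matrix (Config d) (Config d) ℂ) : Prop :=
  ∃ (k : ℕ) (w : Fin k → ℝ)
    (A : Fin k → Matrix (Config (fun i : {i // i ∈ S} => d i))
      (Config (fun i : {i // i ∈ S} => d i)) ℂ)
    (B : Fin k → Matrix (Config (fun i : {i // i ∉ S} => d i))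
      (Config (fun i : {i // i ∉ S} => d i)) ℂ),
    (∀ j, 0 ≤ w j) ∧ (∀ j, (A j).PosSemidef ∧ (B j).PosSemidef) ∧
    ρ = ∑ j, (w j : ℂ) • prodAcross S (A j) (B j)

/-- Biseparable: mixture of states, each separable across some nontrivial bipartition. -/
def Bisep {d : ι → ℕ} (ρ : Matrix (Config d) (Config d) ℂ) : Prop :=
  ∃ (k : ℕ) (w : Fin k → ℝ) (S : Fin k → Finset ι)
    (σ : Fin k → Matrix (Config d) (Config d) ℂ),
    (∀ j, 0 ≤ w j) ∧ (∀ j, S j ≠ ∅ ∧ S j ≠ Finset.univ) ∧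
    (∀ j, SepAcross (S j) (σ j)) ∧ ρ = ∑ j, (w j : ℂ) • σ j


/-- `|ψ_n⟩ = (|10⋯0⟩ + |01⋯0⟩)/√2` as an `n`-qubit vector. -/
def psiVec (n : ℕ) : Config (fun _ : Fin n => 2) → ℂ := fun f =>
  if f = (fun (i : Fin n) => if (i : ℕ) = 0 then (1 : Fin 2) else 0) ∨
     f = (fun (i : Fin n) => if (i : ℕ) = 1 then (1 : Fin 2) else 0) then ((Real.sqrt 2)⁻¹ : ℝ) else 0

/-- `|GHZ_n⟩ = (|0⋯0⟩ + |1⋯1⟩)/√2`. -/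
def ghzVec (n : ℕ) : Config (fun _ : Fin n => 2) → ℂ := fun f =>
  if f = (fun _ => 0) ∨ f = (fun _ => 1) then ((Real.sqrt 2)⁻¹ : ℝ) else 0

def allZero (n : ℕ) : Config (fun _ : Fin n => 2) → ℂ := fun f =>
  if f = (fun _ => 0) then 1 else 0

def allOne (n : ℕ) : Config (fun _ : Fin n => 2) → ℂ := fun f =>
  if f = (fun _ => 1) then 1 else 0

end QDL

/-!
Tracing out any qubit on which `|0⋯0⟩` and `|1⋯1⟩` differ kills the coherences
`|0⋯0⟩⟨1⋯1|` and `|1⋯1⟩⟨0⋯0|`, so on every proper subsystem the GHZ projector has the same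
marginal as `(|0⋯0⟩⟨0⋯0| + |1⋯1⟩⟨1⋯1|)/2`; this turns `ρ` into `σ` without changing any
`(n-1)`-qubit marginal. Each of the three pure components of `σ` is a product across the cut
`{1,2} | {3,…,n}`, and the states separable across a fixed cut form a convex cone.
-/

namespace QDL

variable {ι : Type*} {d : ι → ℕ}

lemma eq_iff_restrict_eq (S : Finset ι) {f a : Config d} :
    f = a ↔ (fun i : {i // i ∈ S} => f i) = (fun i : {i // i ∈ S} => a i) ∧
      (fun i : {i // i ∉ S} => f i) = (fun i : {i // i ∉ S} => a i) := by
  refine ⟨fun h => h ▸ ⟨rfl, rfl⟩, fun ⟨hS, hSc⟩ => funext fun i => ?_⟩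
  by_cases hi : i ∈ S
  · exact congrFun hS ⟨i, hi⟩
  · exact congrFun hSc ⟨i, hi⟩

lemma SepAcross.add {S : Finset ι} {A B : Matrix (Config d) (Config d) ℂ}
    (hA : SepAcross S A) (hB : SepAcross S B) : SepAcross S (A + B) := by
  obtain ⟨k, w, A₁, A₂, hw, hA, rfl⟩ := hA
  obtain ⟨l, v, B₁, B₂, hv, hB, rfl⟩ := hB
  refine ⟨k + l, Fin.append w v, Fin.append A₁ B₁, Fin.append A₂ B₂,
    Fin.addCases (by simpa using hw) (by simpa using hv),
    Fin.addCases (by simpa using hA) (by simpa using hB), ?_⟩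
  simp [Fin.sum_univ_add]

lemma SepAcross.smul {S : Finset ι} {A : Matrix (Config d) (Config d) ℂ} (hA : SepAcross S A)
    {c : ℝ} (hc : 0 ≤ c) : SepAcross S ((c : ℂ) • A) := by
  obtain ⟨k, w, A₁, A₂, hw, hA, rfl⟩ := hA
  refine ⟨k, fun j => c * w j, A₁, A₂, fun j => mul_nonneg hc (hw j), hA, ?_⟩
  simp only [Finset.smul_sum, smul_smul, Complex.ofReal_mul]

section

variable [Fintype ι]

lemma Bisep.of_sepAcross {S : Finset ι} (hS : S ≠ ∅) (hS' : S ≠ Finset.univ)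
    {A : Matrix (Config d) (Config d) ℂ} (hA : SepAcross S A) : Bisep A :=
  ⟨1, fun _ => 1, fun _ => S, fun _ => A, fun _ => zero_le_one, fun _ => ⟨hS, hS'⟩,
    fun _ => hA, by simp⟩

lemma sepAcross_vecMulVec_of_apply_eq_mul (S : Finset ι) {v : Config d → ℂ}
    (u : Config (fun i : {i // i ∈ S} => d i) → ℂ) (w : Config (fun i : {i // i ∉ S} => d i) → ℂ)
    (hv : ∀ f, v f = u (fun i => f i) * w (fun i => f i)) :
    SepAcross S (Matrix.vecMulVec v (star v)) := by
  refine ⟨1, fun _ => 1, fun _ => Matrix.vecMulVec u (star u), fun _ => Matrix.vecMulVec w (star w),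
    fun _ => zero_le_one,
    fun _ => ⟨Matrix.posSemidef_vecMulVec_self_star _, Matrix.posSemidef_vecMulVec_self_star _⟩, ?_⟩
  ext f g
  simp only [Fin.sum_univ_one, Complex.ofReal_one, one_smul, prodAcross, Matrix.vecMulVec_apply,
    Pi.star_apply, hv, star_mul']
  ring

def ket (a : Config d) : Config d → ℂ := fun f => if f = a then 1 else 0

def pairVec (a b : Config d) : Config d → ℂ :=
  (((Real.sqrt 2)⁻¹ : ℝ) : ℂ) • (ket a + ket b)

lemma ite_eq_or_eq_eq_pairVec {a b : Config d} (hab : a ≠ b) :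
    (fun f => if f = a ∨ f = b then (((Real.sqrt 2)⁻¹ : ℝ) : ℂ) else 0) = pairVec a b := by
  ext f
  by_cases ha : f = a
  · subst ha; simp [pairVec, ket, hab]
  · by_cases hb : f = b
    · subst hb; simp [pairVec, ket, Ne.symm hab]
    · simp [pairVec, ket, ha, hb]

lemma vecMulVec_ket_star (a b : Config d) :
    Matrix.vecMulVec (ket a) (star (ket b)) = Matrix.single a b 1 := by
  ext f g
  simp only [ket, Matrix.single, Matrix.of_apply, Matrix.vecMulVec_apply, Pi.star_apply,
    apply_ite star, star_one, star_zero, ite_zero_mul_ite_zero, mul_one, eq_comm]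

lemma vecMulVec_pairVec (a b : Config d) :
    Matrix.vecMulVec (pairVec a b) (star (pairVec a b)) = (2 : ℂ)⁻¹ •
      (Matrix.single a a 1 + Matrix.single a b 1 + Matrix.single b a 1 + Matrix.single b b 1) := by
  have hc : (((Real.sqrt 2)⁻¹ : ℝ) : ℂ) * star (((Real.sqrt 2)⁻¹ : ℝ) : ℂ) = 2⁻¹ := by
    rw [Complex.star_def, Complex.conj_ofReal, ← Complex.ofReal_mul, ← mul_inv,
      Real.mul_self_sqrt zero_le_two]
    norm_num
  simp only [pairVec, star_smul, star_add, Matrix.smul_vecMulVec, Matrix.vecMulVec_smul,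
    Matrix.add_vecMulVec, Matrix.vecMulVec_add, vecMulVec_ket_star]
  rw [← smul_add, smul_smul, mul_comm, hc]
  congr 1
  abel

variable [DecidableEq ι]

lemma trace_vecMulVec_pairVec {a b : Config d} (hab : a ≠ b) :
    (Matrix.vecMulVec (pairVec a b) (star (pairVec a b))).trace = 1 := by
  simp only [vecMulVec_pairVec, Matrix.trace_smul, Matrix.trace_add, Matrix.trace_single_eq_same,
    Matrix.trace_single_eq_of_ne _ _ _ hab, Matrix.trace_single_eq_of_ne _ _ _ hab.symm]
  norm_num

lemma isState_vecMulVec_pairVec {a b : Config d} (hab : a ≠ b) :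
    IsState (Matrix.vecMulVec (pairVec a b) (star (pairVec a b))) :=
  ⟨Matrix.posSemidef_vecMulVec_self_star _, trace_vecMulVec_pairVec hab⟩

lemma isState_single (a : Config d) : IsState (Matrix.single a a (1 : ℂ)) :=
  ⟨vecMulVec_ket_star a a ▸ Matrix.posSemidef_vecMulVec_self_star _,
    Matrix.trace_single_eq_same a 1⟩

lemma isState_smul_add_smul_add_smul {A B C : Matrix (Config d) (Config d) ℂ}
    (hA : IsState A) (hB : IsState B) (hC : IsState C) {a b c : ℝ}
    (ha : 0 ≤ a) (hb : 0 ≤ b) (hc : 0 ≤ c) (habc : a + b + c = 1) :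
    IsState ((a : ℂ) • A + (b : ℂ) • B + (c : ℂ) • C) := by
  refine ⟨((hA.1.smul ?_).add (hB.1.smul ?_)).add (hC.1.smul ?_), ?_⟩
  · exact Complex.zero_le_real.mpr ha
  · exact Complex.zero_le_real.mpr hb
  · exact Complex.zero_le_real.mpr hc
  · rw [Matrix.trace_add, Matrix.trace_add, Matrix.trace_smul, Matrix.trace_smul,
      Matrix.trace_smul, hA.2, hB.2, hC.2]
    simp only [smul_eq_mul, mul_one]
    exact_mod_cast habc

lemma marginal_add (S : Finset ι) (A B : Matrix (Config d) (Config d) ℂ) :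
    marginal S (A + B) = marginal S A + marginal S B := by
  ext f g
  simp [marginal, Finset.sum_add_distrib]

lemma marginal_smul (S : Finset ι) (c : ℂ) (A : Matrix (Config d) (Config d) ℂ) :
    marginal S (c • A) = c • marginal S A := by
  ext f g
  simp [marginal, Finset.mul_sum]

lemma marginal_single_eq_zero (S : Finset ι) {a b : Config d} {i : ι} (hi : i ∉ S)
    (hab : a i ≠ b i) (c : ℂ) : marginal S (Matrix.single a b c) = 0 := by
  ext f g
  refine Finset.sum_eq_zero fun h _ => Matrix.single_apply_of_ne _ _ _ _ _ ?_
  rintro ⟨rfl, rfl⟩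
  exact hab (by simp [merge, hi])

lemma marginal_vecMulVec_pairVec (S : Finset ι) {a b : Config d} {i : ι} (hi : i ∉ S)
    (hab : a i ≠ b i) :
    marginal S (Matrix.vecMulVec (pairVec a b) (star (pairVec a b))) =
      (2 : ℂ)⁻¹ • (marginal S (Matrix.single a a 1) + marginal S (Matrix.single b b 1)) := by
  simp only [vecMulVec_pairVec, marginal_add, marginal_smul, marginal_single_eq_zero S hi hab,
    marginal_single_eq_zero S hi hab.symm, add_zero]

lemma ket_apply_eq_mul (S : Finset ι) (a f : Config d) :
    ket a f = ket (fun i : {i // i ∈ S} => a i) (fun i => f i) *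
      ket (fun i : {i // i ∉ S} => a i) (fun i => f i) := by
  simp only [ket, ite_zero_mul_ite_zero, one_mul]
  exact if_congr (eq_iff_restrict_eq S) rfl rfl

lemma sepAcross_single (S : Finset ι) (a : Config d) : SepAcross S (Matrix.single a a (1 : ℂ)) :=
  vecMulVec_ket_star a a ▸ sepAcross_vecMulVec_of_apply_eq_mul S _ _ (ket_apply_eq_mul S a)

lemma sepAcross_vecMulVec_pairVec (S : Finset ι) {a b : Config d} (hab : ∀ i ∉ S, a i = b i) :
    SepAcross S (Matrix.vecMulVec (pairVec a b) (star (pairVec a b))) := by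
  have hSc : (fun i : {i // i ∉ S} => b i) = (fun i : {i // i ∉ S} => a i) :=
    funext fun i => (hab i i.2).symm
  refine sepAcross_vecMulVec_of_apply_eq_mul S
    ((((Real.sqrt 2)⁻¹ : ℝ) : ℂ) • (ket (fun i : {i // i ∈ S} => a i) +
      ket (fun i : {i // i ∈ S} => b i)))
    (ket (fun i : {i // i ∉ S} => a i)) fun f => ?_
  simp only [pairVec, Pi.smul_apply, Pi.add_apply, ket_apply_eq_mul S a f,
    ket_apply_eq_mul S b f, smul_eq_mul]
  rw [hSc]
  ring

end

def oneAt (n j : ℕ) : Config (fun _ : Fin n => 2) := fun i => if (i : ℕ) = j then 1 else 0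

lemma oneAt_zero_ne_one {n : ℕ} (hn : 0 < n) : oneAt n 0 ≠ oneAt n 1 := fun h => by
  simpa [oneAt] using congrFun h ⟨0, hn⟩

lemma exists_cut_oneAt_zero_eq_one {n : ℕ} (hn : 3 ≤ n) :
    ∃ T : Finset (Fin n), T ≠ ∅ ∧ T ≠ Finset.univ ∧ ∀ i ∉ T, oneAt n 0 i = oneAt n 1 i := by
  refine ⟨Finset.univ.filter fun i => (i : ℕ) < 2, Finset.ne_empty_of_mem (a := ⟨0, by omega⟩)
    (by simp), fun h => ?_, fun i hi => ?_⟩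
  · exact lt_irrefl 2 (Finset.filter_eq_self.mp h ⟨2, hn⟩ (Finset.mem_univ _))
  · simp only [Finset.mem_filter, Finset.mem_univ, true_and] at hi
    simp only [oneAt]
    rw [if_neg (by omega), if_neg (by omega)]

lemma psiVec_eq_pairVec {n : ℕ} (hn : 0 < n) : psiVec n = pairVec (oneAt n 0) (oneAt n 1) :=
  ite_eq_or_eq_eq_pairVec (oneAt_zero_ne_one hn)

lemma ghzVec_eq_pairVec {n : ℕ} (hn : 0 < n) : ghzVec n = pairVec (fun _ => 0) (fun _ => 1) :=
  ite_eq_or_eq_eq_pairVec fun h => by simpa using congrFun h ⟨0, hn⟩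

lemma allZero_eq_ket (n : ℕ) : allZero n = ket fun _ => 0 := rfl

lemma allOne_eq_ket (n : ℕ) : allOne n = ket fun _ => 1 := rfl

/-- for `ρ = p|ψ_n⟩⟨ψ_n| + (1−p)|GHZ_n⟩⟨GHZ_n|` with `0 < p < 1`, the
biseparable state `σ = p|ψ_n⟩⟨ψ_n| + ((1−p)/2)|0⋯0⟩⟨0⋯0| + ((1−p)/2)|1⋯1⟩⟨1⋯1|` has the
same marginals as `ρ` on every subset of size `n−1`; hence `C(ρ, S_{n−1})` contains a
biseparable state. -/
theorem biseparable_state_in_compatibility_set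
    (n : ℕ) (hn : 3 ≤ n) (p : ℝ) (hp0 : 0 < p) (hp1 : p < 1)
    (ρ σ : Matrix (Config (fun _ : Fin n => 2)) (Config (fun _ : Fin n => 2)) ℂ)
    (hρ : ρ = (p : ℂ) • Matrix.vecMulVec (psiVec n) (star (psiVec n)) +
      ((1 - p : ℝ) : ℂ) • Matrix.vecMulVec (ghzVec n) (star (ghzVec n)))
    (hσ : σ = (p : ℂ) • Matrix.vecMulVec (psiVec n) (star (psiVec n)) +
      (((1 - p) / 2 : ℝ) : ℂ) • Matrix.vecMulVec (allZero n) (star (allZero n)) +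
      (((1 - p) / 2 : ℝ) : ℂ) • Matrix.vecMulVec (allOne n) (star (allOne n))) :
    IsState σ ∧ Bisep σ ∧
    ∀ S : Finset (Fin n), S.card = n - 1 → marginal S σ = marginal S ρ := by
  have hn0 : 0 < n := by omega
  have hq : 0 ≤ (1 - p) / 2 := by linarith
  rw [psiVec_eq_pairVec hn0] at hρ hσ
  rw [ghzVec_eq_pairVec hn0] at hρ
  rw [allZero_eq_ket, allOne_eq_ket, vecMulVec_ket_star, vecMulVec_ket_star] at hσ
  subst hρ hσ
  refine ⟨isState_smul_add_smul_add_smul (isState_vecMulVec_pairVec (oneAt_zero_ne_one hn0))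
    (isState_single _) (isState_single _) hp0.le hq hq (by ring), ?_, fun S hS => ?_⟩
  · obtain ⟨T, hT, hT', hagree⟩ := exists_cut_oneAt_zero_eq_one hn
    exact Bisep.of_sepAcross hT hT' ((((sepAcross_vecMulVec_pairVec T hagree).smul hp0.le).add
      ((sepAcross_single T _).smul hq)).add ((sepAcross_single T _).smul hq))
  · obtain ⟨i, -, hi⟩ := Finset.exists_mem_notMem_of_card_lt_card (s := S) (t := .univ)
      (by rw [hS, Finset.card_univ, Fintype.card_fin]; omega)
    simp only [marginal_add, marginal_smul, marginal_vecMulVec_pairVec S hi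
      (d := fun _ : Fin n => 2) (a := fun _ => 0) (b := fun _ => 1) zero_ne_one]
    push_cast
    module

end QDL

end
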